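/- arXiv:0904.3019 — 2 statements merged into one kernel-verified Lean document; each statement's English description precedes it below -/
import Mathlib

section
/- Let A be a unital complex star-algebra, let t ∈ ℂ with t ≠ 0, and let z, ζ ∈ A satisfy the commutation relation ζ z − z ζ = t • (ζ − ζ z²) together with the sphere relation (star ζ) * ζ + z² = 1. Then every two-sided ideal I of A containing z equals A; in other words, z does not belong to any proper two-sided ideal of A. -/
/-- In a unital complex star-algebra, if `ζ z − z ζ = t • (ζ − ζ z²)` with `t ≠ 0` and
`ζ* ζ + z² = 1`, then every two-sided ideal containing `z` is all of `A`; i.e. `z`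
belongs to no proper two-sided ideal. -/
theorem ideal_eq_top_of_natsume_sphere_relations
    (A : Type*) [Ring A] [Algebra ℂ A] [StarRing A]
    (t : ℂ) (ht : t ≠ 0) (z ζ : A)
    (hrel : ζ * z - z * ζ = t • (ζ - ζ * z ^ 2))
    (hsphere : star ζ * ζ + z ^ 2 = 1)
    (I : TwoSidedIdeal A) (hz : z ∈ I) : I = ⊤ := by
  have hz2 : z ^ 2 ∈ I := by
    have := I.mul_mem_left z z hz
    simpa [sq] using this
  have h1 : ζ * z - z * ζ ∈ I :=
    I.sub_mem (I.mul_mem_left ζ z hz) (I.mul_mem_right z ζ hz)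
  have h2 : t • (ζ - ζ * z ^ 2) ∈ I := hrel ▸ h1
  have h3 : ζ * z ^ 2 ∈ I := I.mul_mem_left ζ _ hz2
  have h4 : t • ζ ∈ I := by
    have : t • ζ = t • (ζ - ζ * z ^ 2) + t • (ζ * z ^ 2) := by
      rw [← smul_add]; congr 1; abel
    rw [this]
    exact I.add_mem h2 (by simpa [Algebra.smul_def] using I.mul_mem_left _ _ h3)
  have hζ : ζ ∈ I := by
    have : ζ = t⁻¹ • (t • ζ) := by rw [smul_smul, inv_mul_cancel₀ ht, one_smul]
    rw [this, Algebra.smul_def]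
    exact I.mul_mem_left _ _ h4
  have hone : (1 : A) ∈ I := by
    rw [← hsphere]
    exact I.add_mem (I.mul_mem_left (star ζ) ζ hζ) hz2
  exact eq_top_iff.mpr fun x _ => by simpa using I.mul_mem_left x 1 hone
end

section
/- Let H be an infinite-dimensional separable complex Hilbert space. Let τ : (H →L[ℂ] H) → ℂ be a continuous (operator-norm-bounded) ℂ-linear functional such that τ(S ∘ T) = τ(T ∘ S) for all compact operators S, T. Then τ(K) = 0 for every compact operator K; i.e., the only bounded tracial linear functional on the compact operators is zero. -/
/-!
Write `a ⊗ f` for `rankOne 𝕜 a f = fun x ↦ ⟪f, x⟫ • a`. For a unit vector `u`, the identity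
`(a ⊗ u) (u ⊗ f) = a ⊗ f` and the trace property give `τ (a ⊗ f) = ⟪f, a⟫ τ (u ⊗ u)`.
An orthogonal projection onto an `n`-dimensional subspace has norm at most `1` but is a sum of
`n` rank-one projections, so `n ‖τ (u ⊗ u)‖ ≤ ‖τ‖` for all `n`, and `τ` kills every rank-one
operator. Finally, the projections `P` onto spans of finite sets are uniformly bounded and
converge strongly to the identity, hence uniformly on the relatively compact image of the unit
ball under `K`; so `P K → K` in norm, while `τ (P K) = τ (K P)` is a sum of values of `τ` on
rank-one operators.
-/

open Filter Topology InnerProductSpace Module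

theorem EquicontinuousOn.tendstoUniformlyOn_of_tendsto {ι X α : Type*} [TopologicalSpace X]
    [UniformSpace α] {F : ι → X → α} {f : X → α} {l : Filter ι} {S : Set X}
    (hS : IsCompact S) (hF : EquicontinuousOn F S) (h : ∀ x ∈ S, Tendsto (F · x) l (𝓝 (f x))) :
    TendstoUniformlyOn F f l S := by
  have := (EquicontinuousOn.tendsto_uniformOnFun_iff_pi' (𝔖 := {S}) (by simpa) (by simpa) l f).2
    (by simpa [tendsto_pi_nhds] using h)
  exact UniformOnFun.tendsto_iff_tendstoUniformlyOn.1 this S rfl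

section CompactOperator

variable {𝕜 E F G ι : Type*} [RCLike 𝕜] [NormedAddCommGroup E] [NormedSpace 𝕜 E]
  [NormedAddCommGroup F] [NormedSpace 𝕜 F] [NormedAddCommGroup G] [NormedSpace 𝕜 G]

theorem IsCompactOperator.tendsto_comp_of_tendsto {K : E →L[𝕜] F} (hK : IsCompactOperator K)
    {P : ι → F →L[𝕜] G} {Q : F →L[𝕜] G} {l : Filter ι} {C : ℝ} (hPC : ∀ i, ‖P i‖ ≤ C)
    (hPQ : ∀ y, Tendsto (P · y) l (𝓝 (Q y))) :
    Tendsto (fun i ↦ P i ∘L K) l (𝓝 (Q ∘L K)) := by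
  obtain ⟨S, hS, hKS⟩ := hK.image_closedBall_subset_compact 1
  have hP : Equicontinuous ((↑) ∘ P) :=
    ((NormedSpace.equicontinuous_TFAE P).out 5 1).1 (⟨C, hPC⟩ : ∃ C, ∀ i, ‖P i‖ ≤ C)
  have hunif := Metric.tendstoUniformlyOn_iff.1
    (hP.equicontinuousOn S |>.tendstoUniformlyOn_of_tendsto hS fun y _ ↦ hPQ y)
  refine Metric.tendsto_nhds.2 fun ε hε ↦ ?_
  filter_upwards [hunif (ε / 2) (half_pos hε)] with i hi
  rw [dist_eq_norm]
  refine lt_of_le_of_lt (ContinuousLinearMap.opNorm_le_of_unit_norm (half_pos hε).le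
    fun x hx ↦ ?_) (half_lt_self hε)
  have := hi (K x) (hKS ⟨x, by simp [hx], rfl⟩)
  rw [dist_eq_norm'] at this
  exact this.le

end CompactOperator

section Hilbert

variable {𝕜 E : Type*} [RCLike 𝕜] [NormedAddCommGroup E] [InnerProductSpace 𝕜 E]

theorem isCompactOperator_rankOne (x y : E) : IsCompactOperator (rankOne 𝕜 x y) :=
  (isCompactOperator_of_locallyCompactSpace_rng (ContinuousLinearMap.toSpanSingleton 𝕜 x)).comp_clm
    (innerSL 𝕜 y)

theorem exists_submodule_finiteDimensional_finrank_eq (hE : ¬ FiniteDimensional 𝕜 E) (n : ℕ) :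
    ∃ U : Submodule 𝕜 E, FiniteDimensional 𝕜 U ∧ finrank 𝕜 U = n := by
  have hn : (n : Cardinal) ≤ Module.rank 𝕜 E :=
    Cardinal.natCast_lt_aleph0.le.trans (not_lt.1 (mt Module.rank_lt_aleph0_iff.1 hE))
  obtain ⟨v, hv⟩ := exists_linearIndependent_of_le_rank hn
  exact ⟨_, FiniteDimensional.span_of_finite 𝕜 (Set.finite_range v), by
    simpa using finrank_span_eq_card hv⟩

theorem tendsto_starProjection_span_finset (y : E) :
    Tendsto (fun s : Finset E ↦ (Submodule.span 𝕜 (s : Set E)).starProjection y) atTop (𝓝 y) :=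
  tendsto_const_nhds.congr' <| eventually_atTop.2 ⟨{y}, fun _ hs ↦
    (Submodule.starProjection_eq_self_iff.2 <|
      Submodule.subset_span <| hs <| Finset.mem_singleton_self y).symm⟩

def IsTracialOnCompacts (τ : (E →L[𝕜] E) →L[𝕜] 𝕜) : Prop :=
  ∀ S T : E →L[𝕜] E, IsCompactOperator S → IsCompactOperator T → τ (S * T) = τ (T * S)

namespace IsTracialOnCompacts

variable {τ : (E →L[𝕜] E) →L[𝕜] 𝕜}

theorem map_rankOne (hτ : IsTracialOnCompacts τ) {u : E} (hu : ‖u‖ = 1) (a f : E) :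
    τ (rankOne 𝕜 a f) = inner 𝕜 f a * τ (rankOne 𝕜 u u) := by
  have h₁ : rankOne 𝕜 a u * rankOne 𝕜 u f = rankOne 𝕜 a f := by
    simp [ContinuousLinearMap.mul_def, rankOne_comp_rankOne, inner_self_eq_norm_sq_to_K, hu]
  rw [← h₁, hτ _ _ (isCompactOperator_rankOne _ _) (isCompactOperator_rankOne _ _),
    ContinuousLinearMap.mul_def, rankOne_comp_rankOne, map_smul, smul_eq_mul]

theorem map_starProjection (hτ : IsTracialOnCompacts τ) {u : E} (hu : ‖u‖ = 1)
    (U : Submodule 𝕜 E) [FiniteDimensional 𝕜 U] :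
    τ U.starProjection = finrank 𝕜 U * τ (rankOne 𝕜 u u) := by
  set b := stdOrthonormalBasis 𝕜 U
  have hb (i) : ‖(b i : E)‖ = 1 := b.norm_eq_one i
  rw [b.starProjection_eq_sum_rankOne, map_sum,
    Finset.sum_congr rfl fun i _ ↦ hτ.map_rankOne hu _ _]
  simp [inner_self_eq_norm_sq_to_K, hb]

theorem map_rankOne_self_eq_zero (hτ : IsTracialOnCompacts τ) (hE : ¬ FiniteDimensional 𝕜 E)
    {u : E} (hu : ‖u‖ = 1) :
    τ (rankOne 𝕜 u u) = 0 := by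
  have hbound (n : ℕ) : n * ‖τ (rankOne 𝕜 u u)‖ ≤ ‖τ‖ := by
    obtain ⟨U, _, rfl⟩ := exists_submodule_finiteDimensional_finrank_eq hE n
    calc (finrank 𝕜 U : ℝ) * ‖τ (rankOne 𝕜 u u)‖ = ‖τ U.starProjection‖ := by
          rw [hτ.map_starProjection hu, norm_mul, RCLike.norm_natCast]
      _ ≤ ‖τ‖ * ‖U.starProjection‖ := τ.le_opNorm _
      _ ≤ ‖τ‖ := mul_le_of_le_one_right (norm_nonneg τ) U.starProjection_norm_le
  by_contra hne
  obtain ⟨n, hn⟩ := exists_nat_gt (‖τ‖ / ‖τ (rankOne 𝕜 u u)‖)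
  rw [div_lt_iff₀ (norm_pos_iff.2 hne)] at hn
  exact (hbound n).not_gt hn

theorem map_rankOne_eq_zero (hτ : IsTracialOnCompacts τ) (hE : ¬ FiniteDimensional 𝕜 E)
    (a f : E) :
    τ (rankOne 𝕜 a f) = 0 := by
  obtain ⟨x, hx⟩ : ∃ x : E, x ≠ 0 := by
    by_contra! h
    have : Subsingleton E := ⟨fun a b ↦ by rw [h a, h b]⟩
    exact hE inferInstance
  have hu := norm_smul_inv_norm (𝕜 := 𝕜) hx
  rw [hτ.map_rankOne hu, hτ.map_rankOne_self_eq_zero hE hu, mul_zero]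

theorem map_starProjection_mul_eq_zero (hτ : IsTracialOnCompacts τ)
    (hE : ¬ FiniteDimensional 𝕜 E) (U : Submodule 𝕜 E) [FiniteDimensional 𝕜 U]
    {K : E →L[𝕜] E} (hK : IsCompactOperator K) :
    τ (U.starProjection * K) = 0 := by
  rw [(stdOrthonormalBasis 𝕜 U).starProjection_eq_sum_rankOne, Finset.sum_mul, map_sum]
  refine Finset.sum_eq_zero fun i _ ↦ ?_
  rw [hτ _ _ (isCompactOperator_rankOne _ _) hK, ContinuousLinearMap.mul_def, comp_rankOne,
    hτ.map_rankOne_eq_zero hE]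

end IsTracialOnCompacts

end Hilbert

theorem tracial_functional_vanishes_on_compacts_general
    (H : Type*) [NormedAddCommGroup H] [InnerProductSpace ℂ H]
    (hinf : ¬ FiniteDimensional ℂ H)
    (τ : (H →L[ℂ] H) →L[ℂ] ℂ)
    (htr : ∀ S T : H →L[ℂ] H, IsCompactOperator S → IsCompactOperator T →
      τ (S * T) = τ (T * S))
    (K : H →L[ℂ] H) (hK : IsCompactOperator K) : τ K = 0 := by
  let P (s : Finset H) : H →L[ℂ] H := (Submodule.span ℂ (s : Set H)).starProjection
  have hPK : Tendsto (fun s ↦ P s * K) atTop (𝓝 K) :=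
    hK.tendsto_comp_of_tendsto (Q := .id ℂ H) (fun _ ↦ Submodule.starProjection_norm_le _)
      tendsto_starProjection_span_finset
  have hτPK (s : Finset H) : τ (P s * K) = 0 :=
    IsTracialOnCompacts.map_starProjection_mul_eq_zero htr hinf _ hK
  exact tendsto_nhds_unique ((τ.continuous.tendsto K).comp hPK)
    (tendsto_const_nhds.congr fun s ↦ (hτPK s).symm)

/-- On an infinite-dimensional separable complex Hilbert space, every bounded linear
functional that is tracial on the compact operators vanishes on all compact operators. -/
theorem tracial_functional_vanishes_on_compacts
    (H : Type*) [NormedAddCommGroup H] [InnerProductSpace ℂ H] [CompleteSpace H]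
    [TopologicalSpace.SeparableSpace H] (hinf : ¬ FiniteDimensional ℂ H)
    (τ : (H →L[ℂ] H) →L[ℂ] ℂ)
    (htr : ∀ S T : H →L[ℂ] H, IsCompactOperator S → IsCompactOperator T →
      τ (S * T) = τ (T * S))
    (K : H →L[ℂ] H) (hK : IsCompactOperator K) : τ K = 0 :=
  tracial_functional_vanishes_on_compacts_general H hinf τ htr K hK
end
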